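/- Let (X,𝒜) be a measurable space carrying a measure ν and a probability measure Q. Let Φ be a nonempty collection of measurable functions φ : X → [−∞,∞) such that: (i) ∫ e^φ dν < ∞ for every φ ∈ Φ; (ii) φ + c ∈ Φ for every φ ∈ Φ and every c ∈ ℝ; (iii) the positive part of each φ ∈ Φ is Q-integrable; and (iv) Φ is closed under pointwise midpoints, i.e. ψ₁, ψ₂ ∈ Φ implies (ψ₁+ψ₂)/2 ∈ Φ. Define L(φ,Q) := ∫ φ dQ − ∫ e^φ dν + 1. If L(Q) := sup_{φ∈Φ} L(φ,Q) is finite and ψ₁, ψ₂ ∈ Φ both attain it, then e^{ψ₁} = e^{ψ₂} ν-almost everywhere. -/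
import Mathlib


open MeasureTheory
open scoped ENNReal

/-- The positive part of `a : EReal`, as an extended nonnegative real. -/
noncomputable def erealPos (a : EReal) : ℝ≥0∞ :=
  if a = ⊤ then ⊤ else ENNReal.ofReal a.toReal

/-- The integral `∫ φ dQ ∈ [−∞,∞]` of an `EReal`-valued function, defined as the
difference of the lower integrals of its positive and negative parts. -/
noncomputable def erealIntegral {X : Type*} [MeasurableSpace X] (Q : Measure X)
    (φ : X → EReal) : EReal :=
  ((∫⁻ x, erealPos (φ x) ∂Q : ℝ≥0∞) : EReal) -
    ((∫⁻ x, erealPos (-(φ x)) ∂Q : ℝ≥0∞) : EReal)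

/-- The log-concave-projection functional `L(φ,Q) = ∫ φ dQ − ∫ e^φ dν + 1`. -/
noncomputable def LLfun {X : Type*} [MeasurableSpace X] (ν Q : Measure X)
    (φ : X → EReal) : EReal :=
  erealIntegral Q φ - ((∫⁻ x, EReal.exp (φ x) ∂ν : ℝ≥0∞) : EReal) + 1

lemma measurable_erealPos : Measurable erealPos := by
  unfold erealPos
  exact Measurable.ite (by simp) measurable_const
    (ENNReal.measurable_ofReal.comp measurable_ereal_toReal)

lemma erealPos_coe (r : ℝ) : erealPos (r : EReal) = ENNReal.ofReal r := by
  simp [erealPos]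

lemma erealPos_bot : erealPos ⊥ = 0 := by simp [erealPos]

lemma erealPos_top : erealPos ⊤ = ⊤ := by simp [erealPos]

lemma coe_ennreal_eq_coe_toReal {P : ℝ≥0∞} (hP : P ≠ ⊤) :
    (P : EReal) = ((P.toReal : ℝ) : EReal) := by
  rw [← EReal.toReal_coe_ennreal (x := P)]
  exact (EReal.coe_toReal (by simpa using hP) (EReal.coe_ennreal_ne_bot P)).symm

/-- Representation of `erealIntegral` as a Bochner integral when both parts are finite. -/
lemma erealIntegral_repr {X : Type*} [MeasurableSpace X] (Q : Measure X)
    (φ : X → EReal) (hm : Measurable φ) (hnt : ∀ x, φ x ≠ ⊤)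
    (hP : (∫⁻ x, erealPos (φ x) ∂Q) ≠ ⊤) (hN : (∫⁻ x, erealPos (-(φ x)) ∂Q) ≠ ⊤) :
    (∀ᵐ x ∂Q, φ x ≠ ⊥) ∧ Integrable (fun x => (φ x).toReal) Q ∧
      erealIntegral Q φ = (((∫ x, (φ x).toReal ∂Q : ℝ)) : EReal) := by
  set f : X → ℝ := fun x => (φ x).toReal with hf
  have hgm : Measurable fun x => erealPos (-(φ x)) := measurable_erealPos.comp hm.neg
  have habot : ∀ᵐ x ∂Q, φ x ≠ ⊥ := by
    filter_upwards [ae_lt_top hgm hN] with x hx hbot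
    rw [hbot] at hx; simp [erealPos_top] at hx
  have hpt1 : ∀ x, ENNReal.ofReal (f x) = erealPos (φ x) := by
    intro x; rw [erealPos, if_neg (hnt x)]
  have hpt2 : ∀ x, φ x ≠ ⊥ → ENNReal.ofReal (-f x) = erealPos (-(φ x)) := by
    intro x hx
    rw [show -(φ x) = (((-f x : ℝ)) : EReal) by
      rw [hf]; rw [← EReal.coe_toReal (hnt x) hx]; norm_cast, erealPos_coe]
  have hpt2' : ∀ x, ENNReal.ofReal (-f x) ≤ erealPos (-(φ x)) := by
    intro x
    rcases eq_or_ne (φ x) ⊥ with h | h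
    · simp [hf, h, erealPos_top]
    · exact (hpt2 x h).le
  have hfm : Measurable f := hm.ereal_toReal
  have hfi : Integrable f Q := by
    refine ⟨hfm.aestronglyMeasurable, ?_⟩
    rw [hasFiniteIntegral_iff_norm]
    calc ∫⁻ x, ENNReal.ofReal ‖f x‖ ∂Q
        ≤ ∫⁻ x, (erealPos (φ x) + erealPos (-(φ x))) ∂Q := by
          refine lintegral_mono fun x => ?_
          rw [Real.norm_eq_abs]
          rcases le_total 0 (f x) with h | h
          · rw [abs_of_nonneg h, hpt1 x]
            exact le_add_right le_rfl
          · rw [abs_of_nonpos h]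
            exact le_add_left (hpt2' x)
      _ = (∫⁻ x, erealPos (φ x) ∂Q) + ∫⁻ x, erealPos (-(φ x)) ∂Q :=
          lintegral_add_left (measurable_erealPos.comp hm) _
      _ < ⊤ := by
          exact ENNReal.add_lt_top.mpr ⟨hP.lt_top, hN.lt_top⟩
  refine ⟨habot, hfi, ?_⟩
  have h1 : (∫⁻ x, ENNReal.ofReal (f x) ∂Q) = ∫⁻ x, erealPos (φ x) ∂Q :=
    lintegral_congr hpt1
  have h2 : (∫⁻ x, ENNReal.ofReal (-f x) ∂Q) = ∫⁻ x, erealPos (-(φ x)) ∂Q := by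
    refine lintegral_congr_ae ?_
    filter_upwards [habot] with x hx using hpt2 x hx
  rw [erealIntegral, coe_ennreal_eq_coe_toReal hP, coe_ennreal_eq_coe_toReal hN,
    ← EReal.coe_sub, integral_eq_lintegral_pos_part_sub_lintegral_neg_part hfi,
    h1, h2]

/-- Representation of `LLfun` as a real number (explicit finiteness of negative part). -/
lemma LLfun_repr' {X : Type*} [MeasurableSpace X] (ν Q : Measure X)
    (φ : X → EReal) (hm : Measurable φ) (hnt : ∀ x, φ x ≠ ⊤)
    (hP : (∫⁻ x, erealPos (φ x) ∂Q) ≠ ⊤) (hE : (∫⁻ x, EReal.exp (φ x) ∂ν) ≠ ⊤)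
    (hN : (∫⁻ x, erealPos (-(φ x)) ∂Q) ≠ ⊤) :
    (∀ᵐ x ∂Q, φ x ≠ ⊥) ∧ Integrable (fun x => (φ x).toReal) Q ∧
      LLfun ν Q φ = (((∫ x, (φ x).toReal ∂Q) - (∫⁻ x, EReal.exp (φ x) ∂ν).toReal + 1 : ℝ)
        : EReal) := by
  obtain ⟨hb, hi, hrepr⟩ := erealIntegral_repr Q φ hm hnt hP hN
  refine ⟨hb, hi, ?_⟩
  rw [LLfun, hrepr, coe_ennreal_eq_coe_toReal hE, ← EReal.coe_sub, ← EReal.coe_one,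
    ← EReal.coe_add]

/-- Representation of `LLfun` as a real number. -/
lemma LLfun_repr {X : Type*} [MeasurableSpace X] (ν Q : Measure X)
    (φ : X → EReal) (hm : Measurable φ) (hnt : ∀ x, φ x ≠ ⊤)
    (hP : (∫⁻ x, erealPos (φ x) ∂Q) ≠ ⊤) (hE : (∫⁻ x, EReal.exp (φ x) ∂ν) ≠ ⊤)
    (hLbot : LLfun ν Q φ ≠ ⊥) :
    (∫⁻ x, erealPos (-(φ x)) ∂Q) ≠ ⊤ ∧ (∀ᵐ x ∂Q, φ x ≠ ⊥) ∧
      Integrable (fun x => (φ x).toReal) Q ∧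
      LLfun ν Q φ = (((∫ x, (φ x).toReal ∂Q) - (∫⁻ x, EReal.exp (φ x) ∂ν).toReal + 1 : ℝ)
        : EReal) := by
  have hN : (∫⁻ x, erealPos (-(φ x)) ∂Q) ≠ ⊤ := by
    intro h
    apply hLbot
    rw [LLfun, erealIntegral, h, EReal.coe_ennreal_top, EReal.sub_top, EReal.bot_sub,
      EReal.bot_add]
  obtain ⟨hb, hi, hr⟩ := LLfun_repr' ν Q φ hm hnt hP hE hN
  exact ⟨hN, hb, hi, hr⟩

lemma exp_half_sq (a b : EReal) (ha : a ≠ ⊤) (hb : b ≠ ⊤) :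
    EReal.exp (((2⁻¹:ℝ):EReal) * (a + b)) * EReal.exp (((2⁻¹:ℝ):EReal) * (a + b)) =
      EReal.exp a * EReal.exp b := by
  rw [← EReal.exp_add, ← EReal.exp_add]
  congr 1
  induction a with
  | bot => rw [EReal.bot_add, EReal.mul_bot_of_pos (by norm_num), EReal.bot_add]
  | coe r =>
    induction b with
    | bot => rw [EReal.add_bot, EReal.mul_bot_of_pos (by norm_num), EReal.add_bot]
    | coe s => norm_cast; ring
    | top => exact absurd rfl hb
  | top => exact absurd rfl ha

lemma ennreal_amgm {a b c : ℝ≥0∞} (ha : a ≠ ⊤) (hb : b ≠ ⊤) (hc : c * c = a * b) :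
    c ≤ 2⁻¹ * (a + b) := by
  have hct : c ≠ ⊤ := by
    intro h
    rw [h, ENNReal.top_mul_top] at hc
    exact (ENNReal.mul_ne_top ha hb) hc.symm
  have hrhs : (2⁻¹ : ℝ≥0∞) * (a + b) ≠ ⊤ :=
    ENNReal.mul_ne_top (by simp) (ENNReal.add_ne_top.mpr ⟨ha, hb⟩)
  rw [← ENNReal.toReal_le_toReal hct hrhs, ENNReal.toReal_mul, ENNReal.toReal_add ha hb]
  have hc' : c.toReal * c.toReal = a.toReal * b.toReal := by
    rw [← ENNReal.toReal_mul, ← ENNReal.toReal_mul, hc]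
  have h2 : (2⁻¹ : ℝ≥0∞).toReal = 2⁻¹ := by simp
  rw [h2]
  have hγ : c.toReal = Real.sqrt a.toReal * Real.sqrt b.toReal := by
    have h1 : Real.sqrt (c.toReal * c.toReal) = c.toReal :=
      Real.sqrt_mul_self ENNReal.toReal_nonneg
    rw [← h1, hc', Real.sqrt_mul ENNReal.toReal_nonneg]
  rw [hγ]
  nlinarith [sq_nonneg (Real.sqrt a.toReal - Real.sqrt b.toReal),
    Real.sq_sqrt (ENNReal.toReal_nonneg (a := a)),
    Real.sq_sqrt (ENNReal.toReal_nonneg (a := b))]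

lemma ennreal_amgm_eq {a b c : ℝ≥0∞} (ha : a ≠ ⊤) (hb : b ≠ ⊤) (hc : c * c = a * b)
    (heq : c = 2⁻¹ * (a + b)) : a = b := by
  have hct : c ≠ ⊤ := by
    intro h
    rw [h, ENNReal.top_mul_top] at hc
    exact (ENNReal.mul_ne_top ha hb) hc.symm
  have hc' : c.toReal * c.toReal = a.toReal * b.toReal := by
    rw [← ENNReal.toReal_mul, ← ENNReal.toReal_mul, hc]
  have heq' : c.toReal = 2⁻¹ * (a.toReal + b.toReal) := by
    rw [heq, ENNReal.toReal_mul, ENNReal.toReal_add ha hb]; simp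
  have hab : (a.toReal - b.toReal) ^ 2 = 0 := by
    rw [heq'] at hc'; nlinarith [hc']
  have : a.toReal = b.toReal := by
    have := pow_eq_zero_iff (n := 2) (by norm_num) |>.mp hab
    linarith [this]
  exact (ENNReal.toReal_eq_toReal_iff' ha hb).mp this

lemma erealPos_neg_mid_le (a b : EReal) (ha : a ≠ ⊤) (hb : b ≠ ⊤) :
    erealPos (-(((2⁻¹:ℝ):EReal) * (a + b))) ≤ 2⁻¹ * (erealPos (-a) + erealPos (-b)) := by
  induction a with
  | bot =>
    have : (2⁻¹ : ℝ≥0∞) * (erealPos (-(⊥:EReal)) + erealPos (-b)) = ⊤ := by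
      simp [EReal.neg_bot, erealPos_top, ENNReal.mul_top]
    rw [this]; exact le_top
  | coe r =>
    induction b with
    | bot =>
      have : (2⁻¹ : ℝ≥0∞) * (erealPos (-(r:EReal)) + erealPos (-(⊥:EReal))) = ⊤ := by
        simp [EReal.neg_bot, erealPos_top, ENNReal.mul_top]
      rw [this]; exact le_top
    | coe s =>
      have h1 : -(((2⁻¹:ℝ):EReal) * ((r:EReal) + (s:EReal)))
          = (((-(2⁻¹ * (r + s)) : ℝ)) : EReal) := by norm_cast
      rw [h1, erealPos_coe, ← EReal.coe_neg, ← EReal.coe_neg, erealPos_coe, erealPos_coe]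
      have h2 : -(2⁻¹ * (r + s)) = 2⁻¹ * (-r) + 2⁻¹ * (-s) := by ring
      rw [h2]
      calc ENNReal.ofReal (2⁻¹ * (-r) + 2⁻¹ * (-s))
          ≤ ENNReal.ofReal (2⁻¹ * (-r)) + ENNReal.ofReal (2⁻¹ * (-s)) :=
            ENNReal.ofReal_add_le
        _ = 2⁻¹ * (ENNReal.ofReal (-r) + ENNReal.ofReal (-s)) := by
            have h3 : ENNReal.ofReal (2⁻¹:ℝ) = (2⁻¹:ℝ≥0∞) := by
              rw [ENNReal.ofReal_inv_of_pos (by norm_num), ENNReal.ofReal_ofNat]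
            rw [ENNReal.ofReal_mul (by norm_num), ENNReal.ofReal_mul (by norm_num), h3,
              mul_add]
    | top => exact absurd rfl hb
  | top => exact absurd rfl ha

/-- a.e. uniqueness part of the paper's Theorem 3.3, abstract form.
If `Φ` is moreover closed under pointwise midpoints and `ψ₁, ψ₂ ∈ Φ` both attain the
finite supremum `L(Q)`, then `e^{ψ₁} = e^{ψ₂}` holds `ν`-almost everywhere. -/
theorem stmt7 {X : Type*} [MeasurableSpace X] (ν Q : Measure X)
    [IsProbabilityMeasure Q]
    (Φ : Set (X → EReal)) (hΦne : Φ.Nonempty)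
    (hmeas : ∀ φ ∈ Φ, Measurable φ)
    (hnetop : ∀ φ ∈ Φ, ∀ x, φ x ≠ ⊤)
    (hexpfin : ∀ φ ∈ Φ, (∫⁻ x, EReal.exp (φ x) ∂ν) < ⊤)
    (hshift : ∀ φ ∈ Φ, ∀ c : ℝ, (fun x => φ x + (c : EReal)) ∈ Φ)
    (hposint : ∀ φ ∈ Φ, (∫⁻ x, erealPos (φ x) ∂Q) < ⊤)
    (hmid : ∀ ψ₁ ∈ Φ, ∀ ψ₂ ∈ Φ,
      (fun x => ((2⁻¹ : ℝ) : EReal) * (ψ₁ x + ψ₂ x)) ∈ Φ)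
    (hfin : (⨆ φ ∈ Φ, LLfun ν Q φ) ≠ ⊥ ∧ (⨆ φ ∈ Φ, LLfun ν Q φ) ≠ ⊤)
    (ψ₁ ψ₂ : X → EReal) (hψ₁ : ψ₁ ∈ Φ) (hψ₂ : ψ₂ ∈ Φ)
    (hatt₁ : LLfun ν Q ψ₁ = ⨆ φ ∈ Φ, LLfun ν Q φ)
    (hatt₂ : LLfun ν Q ψ₂ = ⨆ φ ∈ Φ, LLfun ν Q φ) :
    ∀ᵐ x ∂ν, EReal.exp (ψ₁ x) = EReal.exp (ψ₂ x) := by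
  classical
  obtain ⟨hN₁, hb₁, hi₁, hr₁⟩ := LLfun_repr ν Q ψ₁ (hmeas ψ₁ hψ₁) (hnetop ψ₁ hψ₁)
    (hposint ψ₁ hψ₁).ne (hexpfin ψ₁ hψ₁).ne (by rw [hatt₁]; exact hfin.1)
  obtain ⟨hN₂, hb₂, hi₂, hr₂⟩ := LLfun_repr ν Q ψ₂ (hmeas ψ₂ hψ₂) (hnetop ψ₂ hψ₂)
    (hposint ψ₂ hψ₂).ne (hexpfin ψ₂ hψ₂).ne (by rw [hatt₂]; exact hfin.1)
  set I₁ : ℝ := ∫ x, (ψ₁ x).toReal ∂Q with hI₁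
  set I₂ : ℝ := ∫ x, (ψ₂ x).toReal ∂Q with hI₂
  set e₁ : ℝ := (∫⁻ x, EReal.exp (ψ₁ x) ∂ν).toReal with he₁
  set e₂ : ℝ := (∫⁻ x, EReal.exp (ψ₂ x) ∂ν).toReal with he₂
  -- the midpoint
  set ψ : X → EReal := fun x => ((2⁻¹ : ℝ) : EReal) * (ψ₁ x + ψ₂ x) with hψdef
  have hψΦ : ψ ∈ Φ := hmid ψ₁ hψ₁ ψ₂ hψ₂
  have hψnt : ∀ x, ψ x ≠ ⊤ := hnetop ψ hψΦ
  have hψN : (∫⁻ x, erealPos (-(ψ x)) ∂Q) ≠ ⊤ := by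
    have hle : (∫⁻ x, erealPos (-(ψ x)) ∂Q)
        ≤ 2⁻¹ * ((∫⁻ x, erealPos (-(ψ₁ x)) ∂Q) + ∫⁻ x, erealPos (-(ψ₂ x)) ∂Q) := by
      calc (∫⁻ x, erealPos (-(ψ x)) ∂Q)
          ≤ ∫⁻ x, 2⁻¹ * (erealPos (-(ψ₁ x)) + erealPos (-(ψ₂ x))) ∂Q :=
            lintegral_mono fun x =>
              erealPos_neg_mid_le _ _ (hnetop ψ₁ hψ₁ x) (hnetop ψ₂ hψ₂ x)
        _ = _ := by
            rw [lintegral_const_mul' _ _ (by simp),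
              lintegral_add_left (f := fun x => erealPos (-ψ₁ x))
                (measurable_erealPos.comp (hmeas ψ₁ hψ₁).neg)]
    exact ne_top_of_le_ne_top
      (ENNReal.mul_ne_top (by simp) (ENNReal.add_ne_top.mpr ⟨hN₁, hN₂⟩)) hle
  obtain ⟨hbψ, hiψ, hrψ⟩ := LLfun_repr' ν Q ψ (hmeas ψ hψΦ) hψnt
    (hposint ψ hψΦ).ne (hexpfin ψ hψΦ).ne hψN
  set Iψ : ℝ := ∫ x, (ψ x).toReal ∂Q with hIψdef
  set eψ : ℝ := (∫⁻ x, EReal.exp (ψ x) ∂ν).toReal with heψ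
  -- value of the midpoint integral
  have haeψ : ∀ᵐ x ∂Q, (ψ x).toReal = 2⁻¹ * ((ψ₁ x).toReal + (ψ₂ x).toReal) := by
    filter_upwards [hb₁, hb₂] with x h1 h2
    have e1 : ψ₁ x = (((ψ₁ x).toReal : ℝ) : EReal) := (EReal.coe_toReal (hnetop ψ₁ hψ₁ x) h1).symm
    have e2 : ψ₂ x = (((ψ₂ x).toReal : ℝ) : EReal) := (EReal.coe_toReal (hnetop ψ₂ hψ₂ x) h2).symm
    rw [hψdef]
    simp only []
    rw [e1, e2, ← EReal.coe_add, ← EReal.coe_mul, EReal.toReal_coe]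
    simp [EReal.toReal_coe]
  have hIψ : Iψ = 2⁻¹ * (I₁ + I₂) := by
    rw [hIψdef, integral_congr_ae haeψ, integral_const_mul, integral_add hi₁ hi₂]
  -- the supremum is attained, compare
  have hSle : LLfun ν Q ψ ≤ LLfun ν Q ψ₁ := by
    rw [hatt₁]
    exact le_biSup (fun φ => LLfun ν Q φ) hψΦ
  have hseq : I₁ - e₁ + 1 = I₂ - e₂ + 1 := by
    have : ((I₁ - e₁ + 1 : ℝ) : EReal) = ((I₂ - e₂ + 1 : ℝ) : EReal) := by
      rw [← hr₁, ← hr₂, hatt₁, hatt₂]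
    exact_mod_cast this
  have hineq : Iψ - eψ + 1 ≤ I₁ - e₁ + 1 := by
    have : ((Iψ - eψ + 1 : ℝ) : EReal) ≤ ((I₁ - e₁ + 1 : ℝ) : EReal) := by
      rw [← hrψ, ← hr₁]; exact hSle
    exact_mod_cast this
  have heψ_ge : 2⁻¹ * (e₁ + e₂) ≤ eψ := by
    rw [hIψ] at hineq; linarith
  -- exponential side
  have hA : Measurable fun x => EReal.exp (ψ₁ x) :=
    EReal.exp_monotone.measurable.comp (hmeas ψ₁ hψ₁)
  have hB : Measurable fun x => EReal.exp (ψ₂ x) :=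
    EReal.exp_monotone.measurable.comp (hmeas ψ₂ hψ₂)
  have hAnt : ∀ x, EReal.exp (ψ₁ x) ≠ ⊤ := fun x => by
    rw [ne_eq, EReal.exp_eq_top_iff]; exact hnetop ψ₁ hψ₁ x
  have hBnt : ∀ x, EReal.exp (ψ₂ x) ≠ ⊤ := fun x => by
    rw [ne_eq, EReal.exp_eq_top_iff]; exact hnetop ψ₂ hψ₂ x
  have hsq : ∀ x, EReal.exp (ψ x) * EReal.exp (ψ x)
      = EReal.exp (ψ₁ x) * EReal.exp (ψ₂ x) := fun x =>
    exp_half_sq _ _ (hnetop ψ₁ hψ₁ x) (hnetop ψ₂ hψ₂ x)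
  have hpt : ∀ x, EReal.exp (ψ x) ≤ 2⁻¹ * (EReal.exp (ψ₁ x) + EReal.exp (ψ₂ x)) :=
    fun x => ennreal_amgm (hAnt x) (hBnt x) (hsq x)
  have hglin : (∫⁻ x, 2⁻¹ * (EReal.exp (ψ₁ x) + EReal.exp (ψ₂ x)) ∂ν)
      = 2⁻¹ * ((∫⁻ x, EReal.exp (ψ₁ x) ∂ν) + ∫⁻ x, EReal.exp (ψ₂ x) ∂ν) := by
    rw [lintegral_const_mul' _ _ (by simp), lintegral_add_left hA]
  have hC_ne : 2⁻¹ * ((∫⁻ x, EReal.exp (ψ₁ x) ∂ν) + ∫⁻ x, EReal.exp (ψ₂ x) ∂ν) ≠ ⊤ :=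
    ENNReal.mul_ne_top (by simp)
      (ENNReal.add_ne_top.mpr ⟨(hexpfin ψ₁ hψ₁).ne, (hexpfin ψ₂ hψ₂).ne⟩)
  have hCtoReal : (2⁻¹ * ((∫⁻ x, EReal.exp (ψ₁ x) ∂ν) + ∫⁻ x, EReal.exp (ψ₂ x) ∂ν)).toReal
      = 2⁻¹ * (e₁ + e₂) := by
    rw [ENNReal.toReal_mul, ENNReal.toReal_add (hexpfin ψ₁ hψ₁).ne (hexpfin ψ₂ hψ₂).ne]
    simp [he₁, he₂]
  have hEle : (∫⁻ x, EReal.exp (ψ x) ∂ν)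
      ≤ 2⁻¹ * ((∫⁻ x, EReal.exp (ψ₁ x) ∂ν) + ∫⁻ x, EReal.exp (ψ₂ x) ∂ν) :=
    (lintegral_mono hpt).trans_eq hglin
  have hEge : 2⁻¹ * ((∫⁻ x, EReal.exp (ψ₁ x) ∂ν) + ∫⁻ x, EReal.exp (ψ₂ x) ∂ν)
      ≤ ∫⁻ x, EReal.exp (ψ x) ∂ν := by
    rw [← ENNReal.toReal_le_toReal hC_ne (hexpfin ψ hψΦ).ne, hCtoReal]
    exact heψ_ge
  have hae : (fun x => EReal.exp (ψ x))
      =ᵐ[ν] fun x => 2⁻¹ * (EReal.exp (ψ₁ x) + EReal.exp (ψ₂ x)) := by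
    refine ae_eq_of_ae_le_of_lintegral_le (ae_of_all _ hpt) (hexpfin ψ hψΦ).ne
      ((measurable_const.mul (hA.add hB)).aemeasurable) ?_
    rw [hglin]
    exact hEge
  filter_upwards [hae] with x hx
  exact ennreal_amgm_eq (hAnt x) (hBnt x) (hsq x) hx
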